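/- Let P be a user distribution on relevance vectors over a finite document set X with metric D, and suppose P is conditionally L-continuous with respect to (X, D). Then for all documents x, y ∈ X and every subset S ⊆ X, the conditional probability P(π(x) = 1 and π(y) = 0 | Z_S) ≤ D(x, y). -/

import Mathlib

/-! Since `Z_{S ∪ {y}} = {π y = 0} ∩ Z_S`, moving the event `π y = 0` into the condition shrinks
the denominator only, so `P(π x = 1 ∧ π y = 0 | Z_S) ≤ μ(x | Z_{S ∪ {y}})`. Given `Z_{S ∪ {y}}`,
the mean at `y` is `0`, and continuity bounds the mean at `x` by `D(x, y)`. -/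

open scoped Classical
open Finset

/-- Probability of an event under a distribution `P` on relevance vectors. -/
noncomputable def pr {X : Type*} [Fintype X] [DecidableEq X]
    (P : (X → Bool) → ℝ) (E : Set (X → Bool)) : ℝ :=
  ∑ π : X → Bool, if π ∈ E then P π else 0

/-- Conditional probability `P(E | F)`. -/
noncomputable def condPr {X : Type*} [Fintype X] [DecidableEq X]
    (P : (X → Bool) → ℝ) (E F : Set (X → Bool)) : ℝ :=
  pr P (E ∩ F) / pr P F

/-- The event `Z_S` that all documents in `S` are irrelevant. -/
def ZS {X : Type*} (S : Finset X) : Set (X → Bool) :=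
  {π | ∀ s ∈ S, π s = false}

/-- Conditional pointwise mean `μ(x | Z_S)`. -/
noncomputable def condMean {X : Type*} [Fintype X] [DecidableEq X]
    (P : (X → Bool) → ℝ) (x : X) (S : Finset X) : ℝ :=
  condPr P {π | π x = true} (ZS S)

lemma ZS_insert {X : Type*} [DecidableEq X] (y : X) (S : Finset X) :
    ZS (insert y S) = {π | π y = false} ∩ ZS S := by
  ext π
  simp [ZS]

section

variable {X : Type*} [Fintype X] [DecidableEq X] (P : (X → Bool) → ℝ)

@[simp]
lemma pr_empty : pr P ∅ = 0 := by
  simp [pr]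

lemma pr_nonneg (hP0 : ∀ π, 0 ≤ P π) (E : Set (X → Bool)) : 0 ≤ pr P E :=
  Finset.sum_nonneg fun π _ => by split_ifs <;> simp [hP0 π]

lemma pr_mono (hP0 : ∀ π, 0 ≤ P π) {E F : Set (X → Bool)} (h : E ⊆ F) : pr P E ≤ pr P F :=
  Finset.sum_le_sum fun π _ => by
    by_cases hE : π ∈ E
    · simp [hE, h hE]
    · split_ifs <;> simp [hP0 π]

/-- When `pr P (F ∩ G) = 0` the right side is `0` by the `x / 0 = 0` convention, but then so is
the numerator on the left. -/
lemma condPr_inter_le (hP0 : ∀ π, 0 ≤ P π) (E F G : Set (X → Bool)) :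
    condPr P (E ∩ F) G ≤ condPr P E (F ∩ G) := by
  unfold condPr
  rw [Set.inter_assoc]
  have hnum : pr P (E ∩ (F ∩ G)) ≤ pr P (F ∩ G) := pr_mono P hP0 Set.inter_subset_right
  rcases (pr_nonneg P hP0 (F ∩ G)).eq_or_lt with hzero | hpos
  · have hnum_zero : pr P (E ∩ (F ∩ G)) = 0 :=
      le_antisymm (hzero ▸ hnum) (pr_nonneg P hP0 _)
    simp [hnum_zero]
  · exact div_le_div_of_nonneg_left (pr_nonneg P hP0 _) hpos
      (pr_mono P hP0 Set.inter_subset_right)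

lemma condMean_insert_self (y : X) (S : Finset X) : condMean P y (insert y S) = 0 := by
  have hdisj : {π : X → Bool | π y = true} ∩ ZS (insert y S) = ∅ := by
    ext π
    simp +contextual [ZS]
  simp [condMean, condPr, hdisj]

end

theorem cond_prob_relevant_irrelevant_le_dist_general
    {X : Type*} [Fintype X] [DecidableEq X] [MetricSpace X]
    (P : (X → Bool) → ℝ)
    (hP0 : ∀ π, 0 ≤ P π)
    (hLip : ∀ (x y : X) (S : Finset X),
      |condMean P x S - condMean P y S| ≤ dist x y)
    (x y : X) (S : Finset X) :
    condPr P {π | π x = true ∧ π y = false} (ZS S) ≤ dist x y := by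
  calc condPr P {π | π x = true ∧ π y = false} (ZS S)
      = condPr P ({π | π x = true} ∩ {π | π y = false}) (ZS S) := rfl
    _ ≤ condPr P {π | π x = true} ({π | π y = false} ∩ ZS S) := condPr_inter_le P hP0 _ _ _
    _ = condMean P x (insert y S) := by rw [condMean, ZS_insert]
    _ ≤ dist x y := by
      simpa [condMean_insert_self] using (le_abs_self _).trans (hLip x y (insert y S))

/-- under conditional L-continuity,
`P(π(x) = 1 ∧ π(y) = 0 | Z_S) ≤ D(x, y)`. -/
theorem cond_prob_relevant_irrelevant_le_dist
    {X : Type*} [Fintype X] [DecidableEq X] [MetricSpace X]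
    (P : (X → Bool) → ℝ)
    (hP0 : ∀ π, 0 ≤ P π) (hP1 : ∑ π : X → Bool, P π = 1)
    (hZ : ∀ S : Finset X, 0 < pr P (ZS S))
    (hLip : ∀ (x y : X) (S : Finset X),
      |condMean P x S - condMean P y S| ≤ dist x y)
    (x y : X) (S : Finset X) :
    condPr P {π | π x = true ∧ π y = false} (ZS S) ≤ dist x y :=
  cond_prob_relevant_irrelevant_le_dist_general P hP0 hLip x y S
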